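/- Let a, b, c, p ∈ ℂ with −c ∉ ℕ ∪ {0}, and let i denote the imaginary unit. Define sequences (u_n) and (v_n) by u_0 = 1, u_1 = ab/c + ip, u_2 = iabp/c + a(a+1)b(b+1)/(2c(c+1)) − p²/2, v_0 = 1, v_1 = ab/c − ip, v_2 = −iabp/c + a(a+1)b(b+1)/(2c(c+1)) − p²/2, and for n ≥ 2: u_{n+1} = (((a+n)(b+n) + ip(c+2n))/((n+1)(c+n))) u_n + (p(p − i(a+b+2n−1))/((n+1)(c+n))) u_{n−1} − (p²/((n+1)(c+n))) u_{n−2}, and v_{n+1} = (((a+n)(b+n) − ip(c+2n))/((n+1)(c+n))) v_n + (p(p + i(a+b+2n−1))/((n+1)(c+n))) v_{n−1} − (p²/((n+1)(c+n))) v_{n−2}. Then sin(pz) F(a,b;c;z) = ∑_{n=0}^∞ ((u_n − v_n)/(2i)) z^n for |z| < 1. -/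

import Mathlib

open Complex Finset Polynomial

noncomputable def F (a b c z : ℂ) : ℂ :=
  ∑' n : ℕ, (ascPochhammer ℂ n).eval a * (ascPochhammer ℂ n).eval b /
    ((ascPochhammer ℂ n).eval c * (Nat.factorial n : ℂ)) * z ^ n


noncomputable def AA (a b c : ℂ) (m : ℕ) : ℂ :=
  (ascPochhammer ℂ m).eval a * (ascPochhammer ℂ m).eval b /
    ((ascPochhammer ℂ m).eval c * (Nat.factorial m : ℂ))

noncomputable def eZ (w : ℂ) (j : ℤ) : ℂ :=
  if 0 ≤ j then w ^ j.toNat / (Nat.factorial j.toNat : ℂ) else 0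

lemma eZ_neg (w : ℂ) {j : ℤ} (h : j < 0) : eZ w j = 0 := by
  simp [eZ, not_le.2 h]

lemma eZ_natCast (w : ℂ) (k : ℕ) : eZ w (k : ℤ) = w ^ k / (Nat.factorial k : ℂ) := by
  simp [eZ]

lemma eZ_rec (w : ℂ) (j : ℤ) : w * eZ w (j - 1) = (j : ℂ) * eZ w j := by
  rcases lt_trichotomy j 0 with h | h | h
  · rw [eZ_neg w h, eZ_neg w (by omega), mul_zero, mul_zero]
  · subst h; rw [eZ_neg w (by omega)]; simp
  · obtain ⟨k, rfl⟩ : ∃ k : ℕ, j = (k : ℤ) + 1 := ⟨(j - 1).toNat, by omega⟩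
    rw [add_sub_cancel_right, eZ_natCast, show ((k : ℤ) + 1) = ((k + 1 : ℕ) : ℤ) by push_cast; ring,
      eZ_natCast]
    rw [Nat.factorial_succ]
    push_cast
    have h1 : (Nat.factorial k : ℂ) ≠ 0 := Nat.cast_ne_zero.2 (Nat.factorial_ne_zero k)
    have h2 : ((k : ℂ) + 1) ≠ 0 := by
      have : ((k + 1 : ℕ) : ℂ) ≠ 0 := Nat.cast_ne_zero.2 (by omega)
      push_cast at this; exact this
    field_simp
    ring

section params
variable {a b c : ℂ} (hc : ∀ n : ℕ, -c ≠ (n : ℂ))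
include hc

lemma hcn (n : ℕ) : c + (n : ℂ) ≠ 0 := by
  intro h
  exact hc n (by linear_combination -h)

lemma poch_ne_zero (m : ℕ) : (ascPochhammer ℂ m).eval c ≠ 0 := by
  induction m with
  | zero => simp
  | succ k ih =>
    rw [ascPochhammer_succ_eval]
    exact mul_ne_zero ih (hcn hc k)

lemma AA_rec (m : ℕ) :
    ((m : ℂ) + 1) * (c + m) * AA a b c (m + 1) = (a + m) * (b + m) * AA a b c m := by
  unfold AA
  rw [ascPochhammer_succ_eval, ascPochhammer_succ_eval, ascPochhammer_succ_eval,
    Nat.factorial_succ]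
  have h1 : (ascPochhammer ℂ m).eval c ≠ 0 := poch_ne_zero hc m
  have h2 : (Nat.factorial m : ℂ) ≠ 0 := Nat.cast_ne_zero.2 (Nat.factorial_ne_zero m)
  have h3 : c + (m : ℂ) ≠ 0 := hcn hc m
  have h4 : ((m : ℂ) + 1) ≠ 0 := by
    have : ((m + 1 : ℕ) : ℂ) ≠ 0 := Nat.cast_ne_zero.2 (by omega)
    push_cast at this; exact this
  push_cast
  field_simp

end params

section params2
variable {a b c w : ℂ} (hc : ∀ n : ℕ, -c ≠ (n : ℂ))

noncomputable def TT (a b c w : ℂ) (n : ℕ) : ℂ :=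
  ∑ m ∈ range (n + 1), AA a b c m * eZ w ((n : ℤ) - m)

include hc in
lemma KEY (n : ℕ) :
    ∑ m ∈ range (n + 2), AA a b c m * eZ w ((n : ℤ) + 1 - m) *
      (w * m * ((m : ℂ) + c - 1) - ((m : ℂ) + a) * ((m : ℂ) + b) * ((n : ℂ) + 1 - m)) = 0 := by
  have step : ∀ m : ℕ, AA a b c m * eZ w ((n : ℤ) + 1 - m) *
      (w * m * ((m : ℂ) + c - 1) - ((m : ℂ) + a) * ((m : ℂ) + b) * ((n : ℂ) + 1 - m))
      = (fun m : ℕ => -w * m * ((m : ℂ) + c - 1) * AA a b c m * eZ w ((n : ℤ) + 1 - m)) (m + 1)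
        - (fun m : ℕ => -w * m * ((m : ℂ) + c - 1) * AA a b c m * eZ w ((n : ℤ) + 1 - m)) m := by
    intro m
    simp only
    have hA := AA_rec hc (a := a) (b := b) m
    have hE : w * eZ w ((n : ℤ) - m) = ((n : ℂ) + 1 - m) * eZ w ((n : ℤ) + 1 - m) := by
      have := eZ_rec w ((n : ℤ) + 1 - m)
      rw [show ((n : ℤ) + 1 - m) - 1 = (n : ℤ) - m by ring] at this
      rw [this]
      push_cast
      ring
    have key : ((m : ℂ) + a) * ((m : ℂ) + b) * ((n : ℂ) + 1 - m) * (AA a b c m * eZ w ((n : ℤ) + 1 - m))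
        = w * ((m : ℂ) + 1) * ((m : ℂ) + c) * (AA a b c (m + 1) * eZ w ((n : ℤ) + 1 - (m + 1))) := by
      rw [show ((n : ℤ) + 1 - ((m : ℤ) + 1)) = (n : ℤ) - m by ring]
      calc ((m : ℂ) + a) * ((m : ℂ) + b) * ((n : ℂ) + 1 - m) * (AA a b c m * eZ w ((n : ℤ) + 1 - m))
          = ((a + m) * (b + m) * AA a b c m) * (((n : ℂ) + 1 - m) * eZ w ((n : ℤ) + 1 - m)) := by ring
        _ = (((m : ℂ) + 1) * (c + m) * AA a b c (m + 1)) * (w * eZ w ((n : ℤ) - m)) := by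
            rw [← hA, ← hE]
        _ = w * ((m : ℂ) + 1) * ((m : ℂ) + c) * (AA a b c (m + 1) * eZ w ((n : ℤ) - m)) := by ring
    push_cast
    linear_combination -key
  rw [Finset.sum_congr rfl (fun m _ => step m), Finset.sum_range_sub
    (fun m : ℕ => -w * m * ((m : ℂ) + c - 1) * AA a b c m * eZ w ((n : ℤ) + 1 - m))]
  rw [eZ_neg w (j := (n : ℤ) + 1 - (n + 2 : ℕ)) (by push_cast; omega)]
  simp

end params2

lemma TT_eq (a b c w : ℂ) {n N : ℕ} (h : n ≤ N) :
    TT a b c w n = ∑ m ∈ range (N + 1), AA a b c m * eZ w ((n : ℤ) - m) := by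
  unfold TT
  refine Finset.sum_subset ?_ ?_
  · exact Finset.range_subset_range.2 (Nat.succ_le_succ h)
  · intro m hm1 hm2
    rw [Finset.mem_range] at hm1 hm2
    rw [eZ_neg w (j := (n : ℤ) - m) (by omega), mul_zero]

lemma TT_w0 (a b c : ℂ) (n : ℕ) : TT a b c 0 n = AA a b c n := by
  unfold TT
  rw [Finset.sum_eq_single n]
  · norm_num [eZ]
  · intro m hm hne
    rw [Finset.mem_range] at hm
    have h1 : (0:ℤ) < (n : ℤ) - m := by omega
    have : eZ (0 : ℂ) ((n : ℤ) - m) = 0 := by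
      rw [eZ]
      rw [if_pos (by omega)]
      rw [zero_pow (by omega), zero_div]
    rw [this, mul_zero]
  · intro h; simp at h

lemma Tdelta {a b c : ℂ} (hc : ∀ n : ℕ, -c ≠ (n : ℂ)) (w : ℂ) (k : ℕ) :
    ((k : ℂ) + 3) * (c + ((k : ℂ) + 2)) * TT a b c w (k + 3) =
      ((a + ((k : ℂ) + 2)) * (b + ((k : ℂ) + 2)) + w * (c + 2 * ((k : ℂ) + 2))) * TT a b c w (k + 2)
      - (w ^ 2 + w * (a + b + 2 * ((k : ℂ) + 2) - 1)) * TT a b c w (k + 1)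
      + w ^ 2 * TT a b c w k := by
  rcases eq_or_ne w 0 with rfl | hw
  · simp only [TT_w0]
    have hA := AA_rec hc (a := a) (b := b) (k + 2)
    push_cast at hA
    linear_combination hA
  · have p3 : TT a b c w (k + 3) = ∑ m ∈ range (k + 4), AA a b c m * eZ w ((k : ℤ) + 3 - m) := by
      rw [TT_eq a b c w (le_refl (k+3))]; push_cast; rfl
    have p2 : TT a b c w (k + 2) = ∑ m ∈ range (k + 4), AA a b c m * eZ w ((k : ℤ) + 2 - m) := by
      rw [TT_eq a b c w (show k + 2 ≤ k + 3 by omega)]; push_cast; rfl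
    have p1 : TT a b c w (k + 1) = ∑ m ∈ range (k + 4), AA a b c m * eZ w ((k : ℤ) + 1 - m) := by
      rw [TT_eq a b c w (show k + 1 ≤ k + 3 by omega)]; push_cast; rfl
    have p0 : TT a b c w k = ∑ m ∈ range (k + 4), AA a b c m * eZ w ((k : ℤ) - m) := by
      rw [TT_eq a b c w (show k ≤ k + 3 by omega)]
    have hKEY := KEY (a := a) (b := b) hc (w := w) (k + 2)
    push_cast at hKEY
    have perterm : ∀ m ∈ range (k + 4),
        w * (((k : ℂ) + 3) * (c + ((k : ℂ) + 2)) * (AA a b c m * eZ w ((k : ℤ) + 3 - m))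
          - (((a + ((k : ℂ) + 2)) * (b + ((k : ℂ) + 2)) + w * (c + 2 * ((k : ℂ) + 2))) *
              (AA a b c m * eZ w ((k : ℤ) + 2 - m))
            - (w ^ 2 + w * (a + b + 2 * ((k : ℂ) + 2) - 1)) * (AA a b c m * eZ w ((k : ℤ) + 1 - m))
            + w ^ 2 * (AA a b c m * eZ w ((k : ℤ) - m))))
        = AA a b c m * eZ w ((k : ℤ) + 2 + 1 - m) *
            (w * m * ((m : ℂ) + c - 1) - ((m : ℂ) + a) * ((m : ℂ) + b) * ((k : ℂ) + 2 + 1 - m)) := by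
      intro m _
      have h3 : w * eZ w ((k : ℤ) + 2 - m) = ((k : ℂ) + 3 - m) * eZ w ((k : ℤ) + 3 - m) := by
        have := eZ_rec w ((k : ℤ) + 3 - m)
        rw [show ((k : ℤ) + 3 - m) - 1 = (k : ℤ) + 2 - m by ring] at this
        rw [this]; push_cast; ring
      have h2 : w * eZ w ((k : ℤ) + 1 - m) = ((k : ℂ) + 2 - m) * eZ w ((k : ℤ) + 2 - m) := by
        have := eZ_rec w ((k : ℤ) + 2 - m)
        rw [show ((k : ℤ) + 2 - m) - 1 = (k : ℤ) + 1 - m by ring] at this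
        rw [this]; push_cast; ring
      have h1 : w * eZ w ((k : ℤ) - m) = ((k : ℂ) + 1 - m) * eZ w ((k : ℤ) + 1 - m) := by
        have := eZ_rec w ((k : ℤ) + 1 - m)
        rw [show ((k : ℤ) + 1 - m) - 1 = (k : ℤ) - m by ring] at this
        rw [this]; push_cast; ring
      have e2 : eZ w ((k : ℤ) + 2 - m) = ((k : ℂ) + 3 - m) * eZ w ((k : ℤ) + 3 - m) / w := by
        rw [eq_div_iff hw]; linear_combination h3
      have e1 : eZ w ((k : ℤ) + 1 - m) = ((k : ℂ) + 2 - m) * eZ w ((k : ℤ) + 2 - m) / w := by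
        rw [eq_div_iff hw]; linear_combination h2
      have e0 : eZ w ((k : ℤ) - m) = ((k : ℂ) + 1 - m) * eZ w ((k : ℤ) + 1 - m) / w := by
        rw [eq_div_iff hw]; linear_combination h1
      rw [show ((k : ℤ) + 2 + 1 - m) = (k : ℤ) + 3 - m by ring]
      rw [e0, e1, e2]
      field_simp
      ring
    have main : w * (((k : ℂ) + 3) * (c + ((k : ℂ) + 2)) * TT a b c w (k + 3)
        - (((a + ((k : ℂ) + 2)) * (b + ((k : ℂ) + 2)) + w * (c + 2 * ((k : ℂ) + 2))) * TT a b c w (k + 2)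
          - (w ^ 2 + w * (a + b + 2 * ((k : ℂ) + 2) - 1)) * TT a b c w (k + 1)
          + w ^ 2 * TT a b c w k)) = 0 := by
      rw [p3, p2, p1, p0]
      rw [Finset.mul_sum, Finset.mul_sum, Finset.mul_sum, Finset.mul_sum,
        ← Finset.sum_sub_distrib, ← Finset.sum_add_distrib, ← Finset.sum_sub_distrib,
        Finset.mul_sum]
      rw [Finset.sum_congr rfl perterm]
      exact hKEY
    have := mul_eq_zero.1 main
    rcases this with h | h
    · exact absurd h hw
    · linear_combination h

lemma TT_zero (a b c w : ℂ) : TT a b c w 0 = 1 := by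
  simp [TT, AA, eZ]

lemma TT_one (a b c w : ℂ) : TT a b c w 1 = a * b / c + w := by
  rw [TT, Finset.sum_range_succ, Finset.sum_range_one]
  norm_num [AA, eZ, ascPochhammer_one]
  ring

lemma TT_two (a b c w : ℂ) :
    TT a b c w 2 = w ^ 2 / 2 + w * (a * b / c) + a * (a + 1) * b * (b + 1) / (2 * c * (c + 1)) := by
  rw [TT, Finset.sum_range_succ, Finset.sum_range_succ, Finset.sum_range_one]
  have h2 : ∀ x : ℂ, (ascPochhammer ℂ 2).eval x = x * (x + 1) := by
    intro x
    rw [show (2 : ℕ) = 1 + 1 from rfl, ascPochhammer_succ_eval, ascPochhammer_one]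
    simp
  norm_num [AA, eZ, ascPochhammer_one, h2 a, h2 b, h2 c, Nat.factorial,
    show Int.toNat 2 = 2 from rfl]
  ring

lemma closed {a b c : ℂ} (hc : ∀ n : ℕ, -c ≠ (n : ℂ)) (w : ℂ) (u : ℕ → ℂ)
    (h0 : u 0 = 1) (h1 : u 1 = a * b / c + w)
    (h2 : u 2 = w ^ 2 / 2 + w * (a * b / c) + a * (a + 1) * b * (b + 1) / (2 * c * (c + 1)))
    (hrec : ∀ k : ℕ, ((k : ℂ) + 3) * (c + ((k : ℂ) + 2)) * u (k + 3) =
      ((a + ((k : ℂ) + 2)) * (b + ((k : ℂ) + 2)) + w * (c + 2 * ((k : ℂ) + 2))) * u (k + 2)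
      - (w ^ 2 + w * (a + b + 2 * ((k : ℂ) + 2) - 1)) * u (k + 1)
      + w ^ 2 * u k) :
    ∀ n, u n = TT a b c w n := by
  intro n
  induction n using Nat.strong_induction_on with
  | _ n ih =>
    match n, ih with
    | 0, _ => rw [h0, TT_zero]
    | 1, _ => rw [h1, TT_one]
    | 2, _ => rw [h2, TT_two]
    | (k + 3), ih =>
      have e3 := hrec k
      rw [ih (k + 2) (by omega), ih (k + 1) (by omega), ih k (by omega)] at e3
      have e4 := Tdelta (a := a) (b := b) hc w k
      have hD : ((k : ℂ) + 3) * (c + ((k : ℂ) + 2)) ≠ 0 := by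
        apply mul_ne_zero
        · have : ((k + 3 : ℕ) : ℂ) ≠ 0 := Nat.cast_ne_zero.2 (by omega)
          push_cast at this; exact this
        · have := hcn hc (k + 2)
          push_cast at this; exact this
      exact mul_left_cancel₀ hD (e3.trans e4.symm)

open Filter Topology

lemma inv_tendsto (d : ℂ) : Tendsto (fun n : ℕ => (d + (n : ℂ))⁻¹) atTop (𝓝 0) := by
  rw [tendsto_zero_iff_norm_tendsto_zero]
  have hb : Tendsto (fun n : ℕ => ((n : ℝ) - ‖d‖)) atTop atTop :=
    tendsto_atTop_add_const_right _ _ tendsto_natCast_atTop_atTop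
  have hinf : Tendsto (fun n : ℕ => ‖d + (n : ℂ)‖) atTop atTop := by
    apply tendsto_atTop_mono _ hb
    intro n
    have h1 : ‖(n : ℂ)‖ ≤ ‖d + n‖ + ‖d‖ := by
      calc ‖(n : ℂ)‖ = ‖(d + n) - d‖ := by ring_nf
        _ ≤ ‖d + n‖ + ‖d‖ := norm_sub_le _ _
    have h2 : ‖(n : ℂ)‖ = (n : ℝ) := by
      rw [Complex.norm_natCast]
    linarith
  have : (fun n : ℕ => ‖(d + (n : ℂ))⁻¹‖) = fun n : ℕ => ‖d + (n : ℂ)‖⁻¹ := by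
    funext n; rw [norm_inv]
  rw [this]
  exact tendsto_inv_atTop_zero.comp hinf

lemma ratio_tendsto {a b c : ℂ} (hc : ∀ n : ℕ, -c ≠ (n : ℂ)) :
    Tendsto (fun n : ℕ => (a + n) * (b + n) / (((n : ℂ) + 1) * (c + n))) atTop (𝓝 1) := by
  have h1 : Tendsto (fun n : ℕ => (a + n) / ((n : ℂ) + 1)) atTop (𝓝 1) := by
    have : (fun n : ℕ => (a + n) / ((n : ℂ) + 1)) =
        fun n : ℕ => 1 + (a - 1) * ((1 : ℂ) + n)⁻¹ := by
      funext n
      have hn : ((n : ℂ) + 1) ≠ 0 := by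
        have : ((n + 1 : ℕ) : ℂ) ≠ 0 := Nat.cast_ne_zero.2 (by omega)
        push_cast at this; exact this
      rw [div_eq_iff hn]
      have hn' : ((1 : ℂ) + n) ≠ 0 := by rw [add_comm]; exact hn
      field_simp
      ring
    rw [this]
    have := (tendsto_const_nhds (x := (a - 1)) (f := atTop (α := ℕ))).mul (inv_tendsto 1)
    have h2 := (tendsto_const_nhds (x := (1 : ℂ)) (f := atTop (α := ℕ))).add this
    simpa using h2
  have h2 : Tendsto (fun n : ℕ => (b + n) / (c + (n : ℂ))) atTop (𝓝 1) := by
    have : (fun n : ℕ => (b + n) / (c + (n : ℂ))) =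
        fun n : ℕ => 1 + (b - c) * (c + (n : ℂ))⁻¹ := by
      funext n
      have hn : (c + (n : ℂ)) ≠ 0 := hcn hc n
      field_simp
      ring
    rw [this]
    have := (tendsto_const_nhds (x := (b - c)) (f := atTop (α := ℕ))).mul (inv_tendsto c)
    have h3 := (tendsto_const_nhds (x := (1 : ℂ)) (f := atTop (α := ℕ))).add this
    simpa using h3
  have := h1.mul h2
  rw [one_mul] at this
  apply this.congr
  intro n
  rw [div_mul_div_comm]

lemma Asummable {a b c : ℂ} (hc : ∀ n : ℕ, -c ≠ (n : ℂ)) {z : ℂ} (hz : ‖z‖ < 1) :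
    Summable fun n => ‖AA a b c n * z ^ n‖ := by
  set r : ℝ := (1 + ‖z‖) / 2 with hr
  have hr1 : r < 1 := by rw [hr]; linarith
  have hzr : ‖z‖ < r := by rw [hr]; linarith
  apply summable_of_ratio_norm_eventually_le hr1
  have ht : Tendsto (fun n : ℕ => ‖(a + n) * (b + n) / (((n : ℂ) + 1) * (c + n))‖ * ‖z‖)
      atTop (𝓝 (‖(1 : ℂ)‖ * ‖z‖)) := ((ratio_tendsto (a := a) (b := b) hc).norm).mul_const ‖z‖
  have hone : ‖(1 : ℂ)‖ * ‖z‖ = ‖z‖ := by rw [norm_one, one_mul]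
  rw [hone] at ht
  have hev : ∀ᶠ n : ℕ in atTop,
      ‖(a + n) * (b + n) / (((n : ℂ) + 1) * (c + n))‖ * ‖z‖ < r :=
    ht.eventually_lt_const hzr
  filter_upwards [hev] with n hn
  rw [norm_norm, norm_norm]
  have hD : (((n : ℂ) + 1) * (c + n)) ≠ 0 := by
    apply mul_ne_zero
    · have : ((n + 1 : ℕ) : ℂ) ≠ 0 := Nat.cast_ne_zero.2 (by omega)
      push_cast at this; exact this
    · exact hcn hc n
  have hstep : AA a b c (n + 1) = (a + n) * (b + n) / (((n : ℂ) + 1) * (c + n)) * AA a b c n := by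
    rw [div_mul_eq_mul_div, eq_div_iff hD]
    linear_combination AA_rec hc n (a := a) (b := b)
  calc ‖AA a b c (n + 1) * z ^ (n + 1)‖
      = (‖(a + n) * (b + n) / (((n : ℂ) + 1) * (c + n))‖ * ‖z‖) * ‖AA a b c n * z ^ n‖ := by
        rw [hstep, pow_succ]
        rw [show (a + n) * (b + n) / (((n : ℂ) + 1) * (c + n)) * AA a b c n * (z ^ n * z)
          = ((a + n) * (b + n) / (((n : ℂ) + 1) * (c + n))) * z * (AA a b c n * z ^ n) by ring]
        rw [norm_mul, norm_mul]
    _ ≤ r * ‖AA a b c n * z ^ n‖ :=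
        mul_le_mul_of_nonneg_right (le_of_lt hn) (norm_nonneg _)

lemma Esummable (w z : ℂ) : Summable fun k => ‖w ^ k / (Nat.factorial k : ℂ) * z ^ k‖ := by
  apply Summable.congr (Real.summable_pow_div_factorial ‖w * z‖)
  intro k
  simp [norm_mul, norm_div, norm_pow, Complex.norm_natCast, mul_pow]
  ring

lemma conv_eq {a b c : ℂ} (w z : ℂ) (n : ℕ) :
    ∑ k ∈ range (n + 1), (w ^ k / (Nat.factorial k : ℂ) * z ^ k) * (AA a b c (n - k) * z ^ (n - k))
      = TT a b c w n * z ^ n := by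
  have step1 : ∀ k ∈ range (n + 1),
      (w ^ k / (Nat.factorial k : ℂ) * z ^ k) * (AA a b c (n - k) * z ^ (n - k))
        = AA a b c (n - k) * eZ w ((n : ℤ) - ((n : ℤ) - k)) * z ^ n := by
    intro k hk
    rw [Finset.mem_range] at hk
    rw [show (n : ℤ) - ((n : ℤ) - k) = (k : ℤ) by ring, eZ_natCast]
    have hzpow : z ^ k * z ^ (n - k) = z ^ n := by
      rw [← pow_add]; congr 1; omega
    linear_combination (AA a b c (n - k) * (w ^ k / (Nat.factorial k : ℂ))) * hzpow
  rw [Finset.sum_congr rfl step1]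
  have step2 : ∀ k ∈ range (n + 1),
      AA a b c (n - k) * eZ w ((n : ℤ) - ((n : ℤ) - k)) * z ^ n
        = (fun m : ℕ => AA a b c m * eZ w ((n : ℤ) - m) * z ^ n) (n + 1 - 1 - k) := by
    intro k hk
    rw [Finset.mem_range] at hk
    simp only
    have h1 : n + 1 - 1 - k = n - k := by omega
    rw [h1, show ((n - k : ℕ) : ℤ) = (n : ℤ) - (k : ℤ) by omega]
  rw [Finset.sum_congr rfl step2,
    Finset.sum_range_reflect (fun m : ℕ => AA a b c m * eZ w ((n : ℤ) - m) * z ^ n) (n + 1),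
    TT, Finset.sum_mul]

lemma cauchy {a b c : ℂ} (hc : ∀ n : ℕ, -c ≠ (n : ℂ)) (w : ℂ) {z : ℂ} (hz : ‖z‖ < 1) :
    Summable (fun n => TT a b c w n * z ^ n) ∧
      Complex.exp (w * z) * F a b c z = ∑' n : ℕ, TT a b c w n * z ^ n := by
  have hE := Esummable w z
  have hA := Asummable (a := a) (b := b) hc hz
  constructor
  · apply Summable.congr ((summable_norm_sum_mul_range_of_summable_norm hE hA).of_norm)
    intro n
    exact conv_eq w z n
  · have hexp : Complex.exp (w * z) = ∑' k : ℕ, w ^ k / (Nat.factorial k : ℂ) * z ^ k := by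
      rw [Complex.exp_eq_exp_ℂ, NormedSpace.exp_eq_tsum_div]
      exact tsum_congr fun k => by rw [mul_pow]; ring
    have hF : F a b c z = ∑' n : ℕ, AA a b c n * z ^ n := rfl
    rw [hexp, hF, tsum_mul_tsum_eq_tsum_sum_range_of_summable_norm hE hA]
    exact tsum_congr fun n => conv_eq w z n

theorem stmt13 (a b c p : ℂ) (hc : ∀ n : ℕ, -c ≠ (n : ℂ))
    (u v : ℕ → ℂ)
    (hu0 : u 0 = 1) (hu1 : u 1 = a * b / c + Complex.I * p)
    (hu2 : u 2 = Complex.I * a * b * p / c + a * (a + 1) * b * (b + 1) / (2 * c * (c + 1)) - p ^ 2 / 2)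
    (hv0 : v 0 = 1) (hv1 : v 1 = a * b / c - Complex.I * p)
    (hv2 : v 2 = -(Complex.I * a * b * p) / c + a * (a + 1) * b * (b + 1) / (2 * c * (c + 1)) - p ^ 2 / 2)
    (hrecu : ∀ n : ℕ, 2 ≤ n →
      u (n + 1) = ((a + (n : ℂ)) * (b + (n : ℂ)) + Complex.I * p * (c + 2 * (n : ℂ))) /
          (((n : ℂ) + 1) * (c + (n : ℂ))) * u n
        + p * (p - Complex.I * (a + b + 2 * (n : ℂ) - 1)) / (((n : ℂ) + 1) * (c + (n : ℂ))) * u (n - 1)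
        - p ^ 2 / (((n : ℂ) + 1) * (c + (n : ℂ))) * u (n - 2))
    (hrecv : ∀ n : ℕ, 2 ≤ n →
      v (n + 1) = ((a + (n : ℂ)) * (b + (n : ℂ)) - Complex.I * p * (c + 2 * (n : ℂ))) /
          (((n : ℂ) + 1) * (c + (n : ℂ))) * v n
        + p * (p + Complex.I * (a + b + 2 * (n : ℂ) - 1)) / (((n : ℂ) + 1) * (c + (n : ℂ))) * v (n - 1)
        - p ^ 2 / (((n : ℂ) + 1) * (c + (n : ℂ))) * v (n - 2)) :
    ∀ z : ℂ, ‖z‖ < 1 → Complex.sin (p * z) * F a b c z = ∑' n : ℕ, (u n - v n) / (2 * Complex.I) * z ^ n := by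
  intro z hz
  have hu2' : u 2 = (Complex.I * p) ^ 2 / 2 + (Complex.I * p) * (a * b / c)
      + a * (a + 1) * b * (b + 1) / (2 * c * (c + 1)) := by
    rw [hu2]; linear_combination (-(p ^ 2) / 2) * Complex.I_sq
  have hv1' : v 1 = a * b / c + -(Complex.I * p) := by rw [hv1]; ring
  have hv2' : v 2 = (-(Complex.I * p)) ^ 2 / 2 + (-(Complex.I * p)) * (a * b / c)
      + a * (a + 1) * b * (b + 1) / (2 * c * (c + 1)) := by
    rw [hv2]; linear_combination (-(p ^ 2) / 2) * Complex.I_sq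
  have hD1 : ∀ k : ℕ, ((k : ℂ) + 2 + 1) ≠ 0 := by
    intro k
    have : ((k + 3 : ℕ) : ℂ) ≠ 0 := Nat.cast_ne_zero.2 (by omega)
    push_cast at this
    intro hcon; apply this; linear_combination hcon
  have hD2 : ∀ k : ℕ, c + ((k : ℂ) + 2) ≠ 0 := by
    intro k
    have := hcn hc (k + 2); push_cast at this; exact this
  have hrecu' : ∀ k : ℕ, ((k : ℂ) + 3) * (c + ((k : ℂ) + 2)) * u (k + 3) =
      ((a + ((k : ℂ) + 2)) * (b + ((k : ℂ) + 2)) + (Complex.I * p) * (c + 2 * ((k : ℂ) + 2))) * u (k + 2)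
      - ((Complex.I * p) ^ 2 + (Complex.I * p) * (a + b + 2 * ((k : ℂ) + 2) - 1)) * u (k + 1)
      + (Complex.I * p) ^ 2 * u k := by
    intro k
    have h := hrecu (k + 2) (by omega)
    norm_num at h
    push_cast at h
    have h' : ((k : ℂ) + 2 + 1) * (c + ((k : ℂ) + 2)) * u (k + 3)
        = ((a + ((k : ℂ) + 2)) * (b + ((k : ℂ) + 2)) + Complex.I * p * (c + 2 * ((k : ℂ) + 2))) * u (k + 2)
          + p * (p - Complex.I * (a + b + 2 * ((k : ℂ) + 2) - 1)) * u (k + 1) - p ^ 2 * u k := by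
      rw [h]; field_simp [hD1 k, hD2 k]
    linear_combination h' + (p ^ 2 * u (k + 1) - p ^ 2 * u k) * Complex.I_sq
  have hrecv' : ∀ k : ℕ, ((k : ℂ) + 3) * (c + ((k : ℂ) + 2)) * v (k + 3) =
      ((a + ((k : ℂ) + 2)) * (b + ((k : ℂ) + 2)) + (-(Complex.I * p)) * (c + 2 * ((k : ℂ) + 2))) * v (k + 2)
      - ((-(Complex.I * p)) ^ 2 + (-(Complex.I * p)) * (a + b + 2 * ((k : ℂ) + 2) - 1)) * v (k + 1)
      + (-(Complex.I * p)) ^ 2 * v k := by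
    intro k
    have h := hrecv (k + 2) (by omega)
    norm_num at h
    push_cast at h
    have h' : ((k : ℂ) + 2 + 1) * (c + ((k : ℂ) + 2)) * v (k + 3)
        = ((a + ((k : ℂ) + 2)) * (b + ((k : ℂ) + 2)) - Complex.I * p * (c + 2 * ((k : ℂ) + 2))) * v (k + 2)
          + p * (p + Complex.I * (a + b + 2 * ((k : ℂ) + 2) - 1)) * v (k + 1) - p ^ 2 * v k := by
      rw [h]; field_simp [hD1 k, hD2 k]
    linear_combination h' + (p ^ 2 * v (k + 1) - p ^ 2 * v k) * Complex.I_sq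
  have hu' := closed hc (Complex.I * p) u hu0 hu1 hu2' hrecu'
  have hv' := closed hc (-(Complex.I * p)) v hv0 hv1' hv2' hrecv'
  obtain ⟨hsumP, hP⟩ := cauchy (a := a) (b := b) hc (Complex.I * p) hz
  obtain ⟨hsumM, hM⟩ := cauchy (a := a) (b := b) hc (-(Complex.I * p)) hz
  have h2I : (2 * Complex.I)⁻¹ = -Complex.I / 2 := by
    apply inv_eq_of_mul_eq_one_right
    linear_combination -Complex.I_sq
  have hR : (∑' n : ℕ, (u n - v n) / (2 * Complex.I) * z ^ n)
      = (Complex.exp (Complex.I * p * z) * F a b c z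
          - Complex.exp (-(Complex.I * p) * z) * F a b c z) * (2 * Complex.I)⁻¹ := by
    calc ∑' n : ℕ, (u n - v n) / (2 * Complex.I) * z ^ n
        = ∑' n : ℕ, (TT a b c (Complex.I * p) n * z ^ n
            - TT a b c (-(Complex.I * p)) n * z ^ n) * (2 * Complex.I)⁻¹ :=
          tsum_congr fun n => by rw [hu' n, hv' n]; ring
      _ = (∑' n : ℕ, (TT a b c (Complex.I * p) n * z ^ n
            - TT a b c (-(Complex.I * p)) n * z ^ n)) * (2 * Complex.I)⁻¹ := tsum_mul_right
      _ = ((∑' n : ℕ, TT a b c (Complex.I * p) n * z ^ n)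
            - ∑' n : ℕ, TT a b c (-(Complex.I * p)) n * z ^ n) * (2 * Complex.I)⁻¹ := by
          rw [Summable.tsum_sub hsumP hsumM]
      _ = (Complex.exp (Complex.I * p * z) * F a b c z
            - Complex.exp (-(Complex.I * p) * z) * F a b c z) * (2 * Complex.I)⁻¹ := by
          rw [hP, hM]
  rw [hR, show Complex.sin (p * z)
      = (Complex.exp (-(p * z) * Complex.I) - Complex.exp (p * z * Complex.I)) * Complex.I / 2
      from rfl,
    show -(p * z) * Complex.I = -(Complex.I * p) * z by ring,
    show p * z * Complex.I = Complex.I * p * z by ring, h2I]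
  ring
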